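/- arXiv:1711.01997 — 2 statements merged into one kernel-verified Lean document; each statement's English description precedes it below -/
import Mathlib

section
/- Let p > 1, γ > 0, and δ_γ = γ^{(p−1)/p}/p^{1/p}. The function j : ℝ → ℝ defined by j(z) = δ_γ|z| − (|z| + (1/γ)(1−p)/p)^{1/p} if |z| > 1/γ and j(z) = 0 if |z| ≤ 1/γ is convex on ℝ. -/
/-!
Write `a = 1/γ`, `c = a(1-p)/p` and `g t = δ_γ t - (t + c)^{1/p}`, so that `j z = g (max |z| a)`.
The map `g` is convex on `[-c, ∞)`, being linear minus a concave power, and `δ_γ` is exactly the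
constant for which `g a = 0` and `g' a = 0` (note `a + c = 1/(pγ)`); hence `g` is nondecreasing
on `[a, ∞)`. A convex function that is nondecreasing on the range of the convex map
`z ↦ max |z| a` stays convex after composition.
-/

/-- `δ_γ = γ^{(p-1)/p} / p^{1/p}`. -/
noncomputable def deltaGamma (p γ : ℝ) : ℝ := γ ^ ((p - 1)/p) / p ^ ((1:ℝ)/p)

/-- The DC-component `j`. -/
noncomputable def jfun (p γ z : ℝ) : ℝ :=
  if |z| ≤ 1/γ then 0 else deltaGamma p γ * |z| - (|z| + (1/γ) * ((1 - p)/p)) ^ ((1:ℝ)/p)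

open Set

section LinearMinusRpow

variable {q : ℝ}

theorem convexOn_mul_sub_rpow_add (k c : ℝ) (hq₀ : 0 ≤ q) (hq₁ : q ≤ 1) :
    ConvexOn ℝ (Ici (-c)) fun t ↦ k * t - (t + c) ^ q := by
  have hconc : ConcaveOn ℝ (Ici (-c)) fun t ↦ (t + c) ^ q := by
    have hpre : (fun t ↦ t + c) ⁻¹' Ici 0 = Ici (-c) := by
      ext t; simp [neg_le_iff_add_nonneg]
    simpa only [Function.comp_def, add_comm c, hpre] using
      (Real.concaveOn_rpow hq₀ hq₁).translate_right c
  exact (LinearMap.convexOn (k • LinearMap.id) (convex_Ici _)).sub hconc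

theorem monotoneOn_mul_sub_rpow_add {k c t₀ : ℝ} (hq₀ : 0 ≤ q) (hq₁ : q ≤ 1)
    (ht₀ : 0 < t₀ + c) (hk : q * (t₀ + c) ^ (q - 1) ≤ k) :
    MonotoneOn (fun t ↦ k * t - (t + c) ^ q) (Ici t₀) := by
  have hderiv : ∀ t ∈ Ici t₀,
      HasDerivAt (fun t ↦ k * t - (t + c) ^ q) (k - q * (t + c) ^ (q - 1)) t := by
    intro t ht
    have hpos : 0 < t + c := by linarith [mem_Ici.mp ht]
    have hlin : HasDerivAt (fun t ↦ k * t) k t := by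
      simpa using (hasDerivAt_id t).const_mul k
    have hpow : HasDerivAt (fun t ↦ (t + c) ^ q) (q * (t + c) ^ (q - 1)) t := by
      simpa using ((hasDerivAt_id t).add_const c).rpow_const (Or.inl hpos.ne')
    exact hlin.sub hpow
  refine monotoneOn_of_deriv_nonneg (convex_Ici t₀)
    (fun t ht ↦ (hderiv t ht).continuousAt.continuousWithinAt)
    (fun t ht ↦ (hderiv t (interior_subset ht)).differentiableAt.differentiableWithinAt)
    fun t ht ↦ ?_
  rw [interior_Ici] at ht
  rw [(hderiv t (Ioi_subset_Ici_self ht)).deriv, sub_nonneg]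
  calc q * (t + c) ^ (q - 1) ≤ q * (t₀ + c) ^ (q - 1) := by
        gcongr ?_ * ?_
        exact Real.rpow_le_rpow_of_nonpos ht₀ (by linarith [mem_Ioi.mp ht]) (by linarith)
    _ ≤ k := hk

end LinearMinusRpow

theorem image_univ_max_abs {a : ℝ} (ha : 0 ≤ a) : (fun z : ℝ ↦ max |z| a) '' univ = Ici a := by
  ext x
  simp only [image_univ, mem_range, mem_Ici]
  refine ⟨fun ⟨z, hz⟩ ↦ hz ▸ le_max_right _ _, fun hx ↦ ⟨x, ?_⟩⟩
  rw [abs_of_nonneg (ha.trans hx), max_eq_left hx]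

theorem deltaGamma_eq_mul_rpow {p γ : ℝ} (hp : 0 < p) (hγ : 0 < γ) :
    deltaGamma p γ = γ * (p * γ) ^ (-(1 / p)) := by
  rw [deltaGamma, Real.mul_rpow hp.le hγ.le, Real.rpow_neg hp.le, Real.rpow_neg hγ.le,
    show (p - 1) / p = 1 + -(1 / p) by field_simp; ring, Real.rpow_add hγ, Real.rpow_one,
    Real.rpow_neg hγ.le]
  ring

theorem deltaGamma_mul_one_div {p γ : ℝ} (hp : 0 < p) (hγ : 0 < γ) :
    deltaGamma p γ * (1 / γ) = (p * γ)⁻¹ ^ (1 / p) := by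
  rw [deltaGamma_eq_mul_rpow hp hγ, Real.inv_rpow (by positivity), ← Real.rpow_neg (by positivity)]
  field_simp

theorem deltaGamma_eq_one_div_mul_rpow {p γ : ℝ} (hp : 0 < p) (hγ : 0 < γ) :
    deltaGamma p γ = 1 / p * (p * γ)⁻¹ ^ (1 / p - 1) := by
  rw [deltaGamma_eq_mul_rpow hp hγ, Real.inv_rpow (by positivity), ← Real.rpow_neg (by positivity),
    neg_sub, Real.rpow_sub (by positivity), Real.rpow_one, Real.rpow_neg (by positivity)]
  field_simp

theorem stmt_7 (p γ : ℝ) (hp : 1 < p) (hγ : 0 < γ) :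
    ConvexOn ℝ Set.univ (jfun p γ) := by
  have hp₀ : 0 < p := by linarith
  set a := 1 / γ
  set c := 1 / γ * ((1 - p) / p)
  set g := fun t ↦ deltaGamma p γ * t - (t + c) ^ (1 / p)
  have hac : a + c = (p * γ)⁻¹ := by simp only [a, c]; field_simp; ring
  have hga : g a = 0 := by
    simp only [g, hac, a, deltaGamma_mul_one_div hp₀ hγ, sub_self]
  have hj : jfun p γ = g ∘ fun z ↦ max |z| a := by
    funext z
    simp only [jfun, Function.comp]
    split_ifs with h
    · rw [max_eq_right h, hga]
    · rw [max_eq_left (not_le.mp h).le]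
  have himage := image_univ_max_abs (show 0 ≤ a by positivity)
  have hexp₀ : 0 ≤ 1 / p := by positivity
  have hexp₁ : 1 / p ≤ 1 := (div_le_one hp₀).mpr hp.le
  rw [hj]
  refine ConvexOn.comp ?_ (convexOn_univ_norm.sup (convexOn_const a convex_univ)) ?_ <;>
    rw [himage]
  · exact (convexOn_mul_sub_rpow_add _ c hexp₀ hexp₁).subset
      (Ici_subset_Ici.mpr (by linarith [inv_pos.mpr (mul_pos hp₀ hγ)])) (convex_Ici a)
  · refine monotoneOn_mul_sub_rpow_add hexp₀ hexp₁ (by rw [hac]; positivity) ?_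
    rw [hac, ← deltaGamma_eq_one_div_mul_rpow hp₀ hγ]
end

section
/- Let p > 1, γ > 0, and δ_γ = γ^{(p−1)/p}/p^{1/p}. The function g : ℝ → ℝ given by g(z) = δ_γ·z − (z + (1/γ)(1−p)/p)^{1/p} is convex and monotonically nondecreasing on the interval [1/γ, ∞). -/
open Set Real

theorem concaveOn_rpow_add {r : ℝ} (hr₀ : 0 ≤ r) (hr₁ : r ≤ 1) {a c : ℝ} (hac : 0 ≤ a + c) :
    ConcaveOn ℝ (Ici a) fun z : ℝ => (z + c) ^ r := by
  have h := (concaveOn_rpow hr₀ hr₁).translate_right c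
  refine (h.subset (fun z (hz : a ≤ z) => ?_) (convex_Ici a)).congr fun z _ => by
    simp [add_comm]
  change 0 ≤ c + z
  linarith

theorem convexOn_mul_sub_rpow_add_s9 {r : ℝ} (hr₀ : 0 ≤ r) (hr₁ : r ≤ 1) {a c : ℝ}
    (hac : 0 ≤ a + c) (δ : ℝ) :
    ConvexOn ℝ (Ici a) fun z : ℝ => δ * z - (z + c) ^ r :=
  ((LinearMap.mul ℝ ℝ δ).convexOn (convex_Ici a)).sub (concaveOn_rpow_add hr₀ hr₁ hac)

theorem monotoneOn_mul_sub_rpow_add_s9 {r : ℝ} (hr₀ : 0 ≤ r) (hr₁ : r ≤ 1) {a c δ : ℝ}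
    (hac : 0 < a + c) (hδ : r * (a + c) ^ (r - 1) ≤ δ) :
    MonotoneOn (fun z : ℝ => δ * z - (z + c) ^ r) (Ici a) := by
  have hpos : ∀ z ∈ Ici a, 0 < z + c := fun z (hz : a ≤ z) => by linarith
  have hderiv : ∀ z ∈ Ici a, HasDerivAt (fun z : ℝ => δ * z - (z + c) ^ r)
      (δ - r * (z + c) ^ (r - 1)) z := fun z hz => by
    simpa using ((hasDerivAt_id' z).const_mul δ).fun_sub
      (((hasDerivAt_id' z).add_const c).rpow_const (Or.inl (hpos z hz).ne'))
  refine monotoneOn_of_hasDerivWithinAt_nonneg (convex_Ici a)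
    (fun z hz => (hderiv z hz).continuousAt.continuousWithinAt)
    (fun z hz => (hderiv z (interior_subset hz)).hasDerivWithinAt) fun z hz => ?_
  rw [interior_Ici] at hz
  have hpow : (z + c) ^ (r - 1) ≤ (a + c) ^ (r - 1) :=
    rpow_le_rpow_of_nonpos hac (by linarith [hz.out]) (by linarith)
  nlinarith

theorem inv_add_inv_mul_one_sub_div {p γ : ℝ} (hp : p ≠ 0) (hγ : γ ≠ 0) :
    1 / γ + 1 / γ * ((1 - p) / p) = (γ * p)⁻¹ := by
  field_simp
  ring

theorem deltaGamma_eq {p γ : ℝ} (hp : 0 < p) (hγ : 0 < γ) :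
    deltaGamma p γ = 1 / p * (γ * p)⁻¹ ^ (1 / p - 1) := by
  rw [inv_rpow (by positivity), ← rpow_neg (by positivity), mul_rpow hγ.le hp.le, deltaGamma]
  have hexp : -(1 / p - 1) = (p - 1) / p := by
    field_simp
    ring
  have hsplit : p ^ ((p - 1) / p) = p / p ^ (1 / p) := by
    rw [eq_div_iff (by positivity), ← rpow_add hp]
    field_simp
    rw [sub_add_cancel, div_self hp.ne', rpow_one]
  rw [hexp, hsplit]
  field_simp

theorem stmt_9 (p γ : ℝ) (hp : 1 < p) (hγ : 0 < γ)
    (g : ℝ → ℝ)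
    (hg : ∀ z : ℝ, g z = deltaGamma p γ * z - (z + (1/γ) * ((1 - p)/p)) ^ ((1:ℝ)/p)) :
    ConvexOn ℝ (Set.Ici (1/γ)) g ∧ MonotoneOn g (Set.Ici (1/γ)) := by
  have hp₀ : 0 < p := by linarith
  have hr₁ : 1 / p ≤ 1 := (div_le_one hp₀).mpr hp.le
  have hshift := inv_add_inv_mul_one_sub_div hp₀.ne' hγ.ne'
  have hshift_pos : 0 < 1 / γ + 1 / γ * ((1 - p) / p) := by
    rw [hshift]
    positivity
  have hδ := deltaGamma_eq hp₀ hγ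
  rw [← hshift] at hδ
  obtain rfl : g = fun z => deltaGamma p γ * z - (z + 1 / γ * ((1 - p) / p)) ^ (1 / p) :=
    funext hg
  exact ⟨convexOn_mul_sub_rpow_add_s9 (by positivity) hr₁ hshift_pos.le _,
    monotoneOn_mul_sub_rpow_add_s9 (by positivity) hr₁ hshift_pos hδ.ge⟩
end
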